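/- One-step consistency (second-order Taylor expansion) of the scheme: let d, r ∈ ℕ\{0}, R > 0, and let φ : ℝ^d → ℝ be four times continuously differentiable with bounded derivatives of orders 2, 3 and 4. Then there exists a constant C > 0, depending only on R, r, d and the sup-norms of the derivatives of φ of orders 2–4, such that for all x ∈ ℝ^d, all b ∈ ℝ^d and σ_1, …, σ_r ∈ ℝ^d with |b| ≤ R and |σ_p| ≤ R for every p, and all h ∈ (0,1]: | (1/(2r)) Σ_{p=1}^{r} [ φ(x + h b + √(r h) σ_p) + φ(x + h b − √(r h) σ_p) ] − φ(x) − h ∇φ(x)·b − (h/2) Σ_{i,j=1}^{d} a_{ij} ∂²_{x_i x_j} φ(x) | ≤ C h², where a_{ij} := Σ_{p=1}^{r} (σ_p)_i (σ_p)_j. -/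

import Mathlib

open MeasureTheory Set
noncomputable section

/-- Euclidean space `ℝ^d`. -/
abbrev E (d : ℕ) : Type := EuclideanSpace ℝ (Fin d)

/-- Second order partial derivative `∂²_{x_i x_j} φ(x)`. -/
def D2 {d : ℕ} (φ : E d → ℝ) (x : E d) (i j : Fin d) : ℝ :=
  fderiv ℝ (fun y => fderiv ℝ φ y (EuclideanSpace.single j 1)) x (EuclideanSpace.single i 1)

/-! Write `y = x + h b` and `u = √(r h) σ_p`. By Taylor's formula at `y`, the pair
`φ (y + u) + φ (y - u)` equals `2 φ y + D²φ(y)[u, u]` up to `O(‖u‖⁴) = O(h²)`: the third-order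
terms cancel between `+u` and `-u`. Moreover `φ y = φ x + h Dφ(x) b + O(h²)`, and the
`D³`-bound moves `D²φ(y)[u, u]` to `D²φ(x)[u, u] = r h D²φ(x)[σ_p, σ_p]` at cost
`O(h ‖u‖²) = O(h²)`. Averaging over `p` and expanding `D²φ(x)` in the standard basis
produces the `a_{ij}` term. -/

section

variable {F G : Type*} [NormedAddCommGroup F] [NormedSpace ℝ F]
  [NormedAddCommGroup G] [NormedSpace ℝ G]

theorem ContinuousMultilinearMap.map_const_neg {k : ℕ}
    (A : ContinuousMultilinearMap ℝ (fun _ : Fin k => F) G) (v : F) :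
    A (fun _ => -v) = (-1 : ℝ) ^ k • A (fun _ => v) := by
  simpa using A.map_smul_univ (fun _ => (-1 : ℝ)) (fun _ => v)

theorem norm_map_add_sub_sum_iteratedFDeriv_le [CompleteSpace G] {f : F → G} {n : ℕ} {C : ℝ}
    (hf : ContDiff ℝ (n + 1) f) (hC : ∀ z, ‖iteratedFDeriv ℝ (n + 1) f z‖ ≤ C) (x y : F) :
    ‖f (x + y) - ∑ k ∈ Finset.range (n + 1),
        (k.factorial : ℝ)⁻¹ • iteratedFDeriv ℝ k f x (fun _ => y)‖
      ≤ C * ‖y‖ ^ (n + 1) / n.factorial := by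
  rw [map_add_eq_sum_add_integral_iteratedFDeriv (fun t _ => hf.contDiffAt), add_sub_cancel_left,
    norm_smul, norm_inv, Real.norm_natCast, inv_mul_eq_div]
  gcongr
  have hint : ∀ t ∈ uIoc (0 : ℝ) 1,
      ‖(1 - t) ^ n • iteratedFDeriv ℝ (n + 1) f (x + t • y) (fun _ => y)‖ ≤ C * ‖y‖ ^ (n + 1) := by
    intro t ht
    rw [uIoc_of_le zero_le_one] at ht
    obtain ⟨ht0, ht1⟩ := ht
    have hpow : ‖(1 - t) ^ n‖ ≤ 1 := by
      rw [norm_pow, Real.norm_eq_abs, abs_of_nonneg (by linarith)]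
      exact pow_le_one₀ (by linarith) (by linarith)
    rw [norm_smul, ← one_mul (C * ‖y‖ ^ (n + 1))]
    gcongr
    simpa using (iteratedFDeriv ℝ (n + 1) f (x + t • y)).le_of_opNorm_le (hC _) fun _ => y
  simpa using intervalIntegral.norm_integral_le_of_norm_le_const hint

theorem norm_map_add_sub_sub_fderiv_le [CompleteSpace G] {f : F → G} {C : ℝ}
    (hf : ContDiff ℝ 2 f) (hC : ∀ z, ‖iteratedFDeriv ℝ 2 f z‖ ≤ C) (x y : F) :
    ‖f (x + y) - f x - fderiv ℝ f x y‖ ≤ C * ‖y‖ ^ 2 := by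
  simpa [Finset.sum_range_succ, sub_add_eq_sub_sub] using
    norm_map_add_sub_sum_iteratedFDeriv_le (n := 1) hf hC x y

theorem norm_map_add_add_map_sub_sub_le [CompleteSpace G] {f : F → G} {C : ℝ}
    (hf : ContDiff ℝ 4 f) (hC : ∀ z, ‖iteratedFDeriv ℝ 4 f z‖ ≤ C) (x y : F) :
    ‖f (x + y) + f (x - y) - (2 : ℝ) • f x - iteratedFDeriv ℝ 2 f x (fun _ => y)‖
      ≤ C * ‖y‖ ^ 4 / 3 := by
  have hplus := norm_map_add_sub_sum_iteratedFDeriv_le (n := 3) hf hC x y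
  have hminus := norm_map_add_sub_sum_iteratedFDeriv_le (n := 3) hf hC x (-y)
  simp only [Finset.sum_range_succ, Finset.sum_range_zero, ContinuousMultilinearMap.map_const_neg,
    norm_neg, ← sub_eq_add_neg] at hplus hminus
  norm_num [Nat.factorial] at hplus hminus
  calc _ = ‖(f (x + y) - (f x + fderiv ℝ f x y + (1 / 2 : ℝ) • iteratedFDeriv ℝ 2 f x (fun _ => y)
          + (1 / 6 : ℝ) • iteratedFDeriv ℝ 3 f x (fun _ => y)))
        + (f (x - y) - (f x + -fderiv ℝ f x y + (1 / 2 : ℝ) • iteratedFDeriv ℝ 2 f x (fun _ => y)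
          + -((1 / 6 : ℝ) • iteratedFDeriv ℝ 3 f x (fun _ => y))))‖ := by
        congr 1
        module
    _ ≤ C * ‖y‖ ^ 4 / 3 := (norm_add_le _ _).trans (by linarith)

theorem norm_iteratedFDeriv_sub_le {f : F → G} {k : ℕ} {C : ℝ} (hf : ContDiff ℝ (k + 1) f)
    (hC : ∀ z, ‖iteratedFDeriv ℝ (k + 1) f z‖ ≤ C) (x y : F) :
    ‖iteratedFDeriv ℝ k f y - iteratedFDeriv ℝ k f x‖ ≤ C * ‖y - x‖ :=
  convex_univ.norm_image_sub_le_of_norm_fderiv_le (f := iteratedFDeriv ℝ k f)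
    (fun z _ => (hf.differentiable_iteratedFDeriv (by norm_cast; omega)).differentiableAt)
    (fun z _ => by rw [norm_fderiv_iteratedFDeriv]; exact hC z) trivial trivial

theorem norm_symmetric_pair_sub_taylor_le [CompleteSpace G] {f : F → G} {B₂ B₃ B₄ : ℝ}
    (hf : ContDiff ℝ 4 f) (hB₂ : ∀ z, ‖iteratedFDeriv ℝ 2 f z‖ ≤ B₂)
    (hB₃ : ∀ z, ‖iteratedFDeriv ℝ 3 f z‖ ≤ B₃) (hB₄ : ∀ z, ‖iteratedFDeriv ℝ 4 f z‖ ≤ B₄)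
    (x w u : F) :
    ‖f (x + w + u) + f (x + w - u) - (2 : ℝ) • f x - (2 : ℝ) • fderiv ℝ f x w
        - iteratedFDeriv ℝ 2 f x (fun _ => u)‖
      ≤ 2 * B₂ * ‖w‖ ^ 2 + B₃ * ‖w‖ * ‖u‖ ^ 2 + B₄ * ‖u‖ ^ 4 / 3 := by
  have hsymm := norm_map_add_add_map_sub_sub_le hf hB₄ (x + w) u
  have hfirst := norm_map_add_sub_sub_fderiv_le (hf.of_le (by norm_num)) hB₂ x w
  have hsecond : ‖(iteratedFDeriv ℝ 2 f (x + w) - iteratedFDeriv ℝ 2 f x) (fun _ => u)‖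
      ≤ B₃ * ‖w‖ * ‖u‖ ^ 2 := by
    refine ((iteratedFDeriv ℝ 2 f (x + w) - iteratedFDeriv ℝ 2 f x).le_opNorm _).trans ?_
    have hlip := norm_iteratedFDeriv_sub_le (k := 2) (hf.of_le (by norm_num)) hB₃ x (x + w)
    rw [add_sub_cancel_left] at hlip
    simpa using mul_le_mul_of_nonneg_right hlip (by positivity : 0 ≤ ‖u‖ ^ 2)
  calc _ = ‖(f (x + w + u) + f (x + w - u) - (2 : ℝ) • f (x + w)
          - iteratedFDeriv ℝ 2 f (x + w) (fun _ => u))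
        + (2 : ℝ) • (f (x + w) - f x - fderiv ℝ f x w)
        + (iteratedFDeriv ℝ 2 f (x + w) - iteratedFDeriv ℝ 2 f x) (fun _ => u)‖ := by
        rw [sub_apply]
        congr 1
        module
    _ ≤ B₄ * ‖u‖ ^ 4 / 3 + 2 * (B₂ * ‖w‖ ^ 2) + B₃ * ‖w‖ * ‖u‖ ^ 2 := by
        refine (norm_add₃_le).trans ?_
        rw [norm_smul, Real.norm_two]
        gcongr
    _ = _ := by ring

theorem abs_scheme_pair_sub_le {φ : F → ℝ} {B₂ B₃ B₄ R r h s : ℝ} (hφ : ContDiff ℝ 4 φ)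
    (hB₂ : ∀ z, ‖iteratedFDeriv ℝ 2 φ z‖ ≤ B₂) (hB₃ : ∀ z, ‖iteratedFDeriv ℝ 3 φ z‖ ≤ B₃)
    (hB₄ : ∀ z, ‖iteratedFDeriv ℝ 4 φ z‖ ≤ B₄) {x b σ : F} (hb : ‖b‖ ≤ R) (hσ : ‖σ‖ ≤ R)
    (hh : 0 ≤ h) (hs : s ^ 2 = r * h) :
    |φ (x + h • b + s • σ) + φ (x + h • b - s • σ) - 2 * φ x - 2 * (h * fderiv ℝ φ x b)
        - r * h * fderiv ℝ (fderiv ℝ φ) x σ σ|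
      ≤ (2 * B₂ * R ^ 2 + B₃ * R ^ 3 * r + B₄ * R ^ 4 * r ^ 2 / 3) * h ^ 2 := by
  have hB₂₀ : 0 ≤ B₂ := (norm_nonneg _).trans (hB₂ 0)
  have hB₃₀ : 0 ≤ B₃ := (norm_nonneg _).trans (hB₃ 0)
  have hB₄₀ : 0 ≤ B₄ := (norm_nonneg _).trans (hB₄ 0)
  have hR : 0 ≤ R := (norm_nonneg _).trans hb
  have hrh : 0 ≤ r * h := hs ▸ sq_nonneg s
  have hpair := norm_symmetric_pair_sub_taylor_le hφ hB₂ hB₃ hB₄ x (h • b) (s • σ)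
  have hsσ : ‖s • σ‖ ^ 2 = r * h * ‖σ‖ ^ 2 := by
    rw [norm_smul, mul_pow, Real.norm_eq_abs, sq_abs, hs]
  have hsσ4 : ‖s • σ‖ ^ 4 = (r * h) ^ 2 * ‖σ‖ ^ 4 := by
    rw [show 4 = 2 * 2 from rfl, pow_mul, hsσ]; ring
  rw [iteratedFDeriv_two_apply, Real.norm_eq_abs, hsσ, hsσ4, norm_smul, Real.norm_of_nonneg hh]
    at hpair
  simp only [map_smul, smul_apply, smul_eq_mul] at hpair
  calc _ = |φ (x + h • b + s • σ) + φ (x + h • b - s • σ) - 2 * φ x - 2 * (h * fderiv ℝ φ x b)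
        - s * (s * fderiv ℝ (fderiv ℝ φ) x σ σ)| := by rw [← hs]; ring_nf
    _ ≤ 2 * B₂ * (h * ‖b‖) ^ 2 + B₃ * (h * ‖b‖) * (r * h * ‖σ‖ ^ 2)
        + B₄ * ((r * h) ^ 2 * ‖σ‖ ^ 4) / 3 := hpair
    _ ≤ 2 * B₂ * (h * R) ^ 2 + B₃ * (h * R) * (r * h * R ^ 2)
        + B₄ * ((r * h) ^ 2 * R ^ 4) / 3 := by gcongr
    _ = _ := by ring

end

theorem EuclideanSpace.bilinear_apply_eq_sum_single {ι G : Type*} [Fintype ι] [DecidableEq ι]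
    [NormedAddCommGroup G] [NormedSpace ℝ G]
    (A : EuclideanSpace ℝ ι →L[ℝ] EuclideanSpace ℝ ι →L[ℝ] G) (u v : EuclideanSpace ℝ ι) :
    A u v = ∑ i, ∑ j, (u i * v j) • A (EuclideanSpace.single i 1) (EuclideanSpace.single j 1) := by
  conv_lhs => rw [← (EuclideanSpace.basisFun ι ℝ).sum_repr u,
    ← (EuclideanSpace.basisFun ι ℝ).sum_repr v]
  simp only [map_sum, map_smul, FunLike.coe_sum, FunLike.coe_smul,
    Finset.sum_apply, Pi.smul_apply, EuclideanSpace.basisFun_apply, EuclideanSpace.basisFun_repr,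
    Finset.smul_sum, mul_smul]
  rw [Finset.sum_comm]
  exact Finset.sum_congr rfl fun _ _ => Finset.sum_congr rfl fun _ _ => smul_comm _ _ _

section

variable {d : ℕ}

theorem D2_eq_fderiv_fderiv {φ : E d → ℝ} {x : E d} (hφ : DifferentiableAt ℝ (fderiv ℝ φ) x)
    (i j : Fin d) :
    D2 φ x i j =
      fderiv ℝ (fderiv ℝ φ) x (EuclideanSpace.single i 1) (EuclideanSpace.single j 1) := by
  rw [D2, fderiv_clm_apply hφ (differentiableAt_const _)]
  simp

theorem sum_diffusion_mul_D2 {r : ℕ} {φ : E d → ℝ} {x : E d}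
    (hφ : DifferentiableAt ℝ (fderiv ℝ φ) x) (σ : Fin r → E d) :
    ∑ i, ∑ j, (∑ p, σ p i * σ p j) * D2 φ x i j = ∑ p, fderiv ℝ (fderiv ℝ φ) x (σ p) (σ p) := by
  calc _ = ∑ i, ∑ p, ∑ j, (σ p i * σ p j) •
        fderiv ℝ (fderiv ℝ φ) x (EuclideanSpace.single i 1) (EuclideanSpace.single j 1) := by
        simp_rw [D2_eq_fderiv_fderiv hφ, Finset.sum_mul, smul_eq_mul]
        exact Finset.sum_congr rfl fun i _ => Finset.sum_comm
    _ = _ := by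
        rw [Finset.sum_comm]
        exact Finset.sum_congr rfl fun p _ =>
          (EuclideanSpace.bilinear_apply_eq_sum_single _ (σ p) (σ p)).symm

theorem scheme_sub_eq_average {r : ℕ} (hr : 0 < r) {φ : E d → ℝ} {x : E d}
    (hφ : DifferentiableAt ℝ (fderiv ℝ φ) x) (b : E d) (σ : Fin r → E d) (h s : ℝ) :
    (1 / (2 * (r : ℝ))) * ∑ p, (φ (x + h • b + s • σ p) + φ (x + h • b - s • σ p))
        - φ x - h * fderiv ℝ φ x b - (h / 2) * ∑ i, ∑ j, (∑ p, σ p i * σ p j) * D2 φ x i j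
      = (1 / (2 * (r : ℝ))) * ∑ p, (φ (x + h • b + s • σ p) + φ (x + h • b - s • σ p)
        - 2 * φ x - 2 * (h * fderiv ℝ φ x b) - r * h * fderiv ℝ (fderiv ℝ φ) x (σ p) (σ p)) := by
  rw [sum_diffusion_mul_D2 hφ]
  simp only [Finset.sum_sub_distrib, Finset.sum_const, Finset.card_univ, Fintype.card_fin,
    nsmul_eq_mul, ← Finset.mul_sum]
  field_simp

theorem abs_half_average_le {r : ℕ} (hr : 0 < r) {f : Fin r → ℝ} {M : ℝ} (hf : ∀ p, |f p| ≤ M) :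
    |1 / (2 * (r : ℝ)) * ∑ p, f p| ≤ M / 2 := by
  have hr' : (0 : ℝ) < r := Nat.cast_pos.mpr hr
  calc _ ≤ 1 / (2 * (r : ℝ)) * ∑ _p : Fin r, M := by
        rw [abs_mul, abs_of_pos (by positivity)]
        gcongr
        exact (Finset.abs_sum_le_sum_abs _ _).trans (Finset.sum_le_sum fun p _ => hf p)
    _ = M / 2 := by
        rw [Finset.sum_const, Finset.card_univ, Fintype.card_fin, nsmul_eq_mul]
        field_simp

end

theorem one_step_consistency_general
    (d r : ℕ) (hr : 0 < r) (R : ℝ) (hR : 0 < R)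
    (φ : E d → ℝ) (hφ : ContDiff ℝ 4 φ)
    (hbd2 : ∃ B, ∀ x, ‖iteratedFDeriv ℝ 2 φ x‖ ≤ B)
    (hbd3 : ∃ B, ∀ x, ‖iteratedFDeriv ℝ 3 φ x‖ ≤ B)
    (hbd4 : ∃ B, ∀ x, ‖iteratedFDeriv ℝ 4 φ x‖ ≤ B) :
    ∃ C > 0, ∀ (x b : E d) (σ : Fin r → E d), ‖b‖ ≤ R → (∀ p, ‖σ p‖ ≤ R) →
      ∀ h : ℝ, 0 < h → h ≤ 1 →
      |(1/(2*(r:ℝ))) * ∑ p : Fin r,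
          (φ (x + h • b + Real.sqrt (r * h) • σ p) + φ (x + h • b - Real.sqrt (r * h) • σ p))
        - φ x - h * fderiv ℝ φ x b
        - (h/2) * ∑ i : Fin d, ∑ j : Fin d, (∑ p : Fin r, σ p i * σ p j) * D2 φ x i j|
      ≤ C * h^2 := by
  obtain ⟨B₂, hB₂⟩ := hbd2
  obtain ⟨B₃, hB₃⟩ := hbd3
  obtain ⟨B₄, hB₄⟩ := hbd4
  set K := 2 * B₂ * R ^ 2 + B₃ * R ^ 3 * r + B₄ * R ^ 4 * r ^ 2 / 3
  have hK : 0 ≤ K := by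
    have hB₂₀ : 0 ≤ B₂ := (norm_nonneg _).trans (hB₂ 0)
    have hB₃₀ : 0 ≤ B₃ := (norm_nonneg _).trans (hB₃ 0)
    have hB₄₀ : 0 ≤ B₄ := (norm_nonneg _).trans (hB₄ 0)
    positivity
  refine ⟨K + 1, by positivity, fun x b σ hb hσ h hh _ => ?_⟩
  have hs : √(r * h) ^ 2 = r * h := Real.sq_sqrt (by positivity)
  have hφ₂ : DifferentiableAt ℝ (fderiv ℝ φ) x :=
    (hφ.fderiv_right (m := 3) (by norm_num)).differentiable (by norm_num) x
  rw [scheme_sub_eq_average hr hφ₂]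
  calc _ ≤ K * h ^ 2 / 2 := abs_half_average_le hr fun p =>
        abs_scheme_pair_sub_le hφ hB₂ hB₃ hB₄ hb (hσ p) hh.le hs
    _ ≤ (K + 1) * h ^ 2 := by nlinarith [sq_nonneg h]

/-- One-step consistency of the semi-Lagrangian scheme.
For `φ ∈ C⁴` with bounded derivatives of orders 2, 3 and 4, there is a constant `C > 0`,
depending only on `R`, `r`, `d` and the sup-norms of those derivatives, such that for all
`x`, all `b, σ_1, …, σ_r` of norm at most `R`, and all `h ∈ (0,1]`, the symmetric average of
`φ` over the one-step discrete characteristics `x + hb ± √(rh) σ_p` equals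
`φ(x) + h ∇φ(x)·b + (h/2) Σ_{ij} a_{ij} ∂²_{ij}φ(x)`, with `a_{ij} = Σ_p (σ_p)_i (σ_p)_j`,
up to an error of at most `C h²`. -/
theorem one_step_consistency
    (d r : ℕ) (hd : 0 < d) (hr : 0 < r) (R : ℝ) (hR : 0 < R)
    (φ : E d → ℝ) (hφ : ContDiff ℝ 4 φ)
    (hbd2 : ∃ B, ∀ x, ‖iteratedFDeriv ℝ 2 φ x‖ ≤ B)
    (hbd3 : ∃ B, ∀ x, ‖iteratedFDeriv ℝ 3 φ x‖ ≤ B)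
    (hbd4 : ∃ B, ∀ x, ‖iteratedFDeriv ℝ 4 φ x‖ ≤ B) :
    ∃ C > 0, ∀ (x b : E d) (σ : Fin r → E d), ‖b‖ ≤ R → (∀ p, ‖σ p‖ ≤ R) →
      ∀ h : ℝ, 0 < h → h ≤ 1 →
      |(1/(2*(r:ℝ))) * ∑ p : Fin r,
          (φ (x + h • b + Real.sqrt (r * h) • σ p) + φ (x + h • b - Real.sqrt (r * h) • σ p))
        - φ x - h * fderiv ℝ φ x b
        - (h/2) * ∑ i : Fin d, ∑ j : Fin d, (∑ p : Fin r, σ p i * σ p j) * D2 φ x i j|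
      ≤ C * h^2 :=
  one_step_consistency_general d r hr R hR φ hφ hbd2 hbd3 hbd4
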